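/- arXiv:2510.19262 — 4 statements merged into one kernel-verified Lean document; each statement's English description precedes it below -/
import Mathlib

section
/- The uniform allocation is globally optimal for the min–max load-balancing problem: for every traffic matrix D and every allocation matrix P, the maximum over all sending and receiving loads under the uniform allocation P⋆ (with P⋆ k f n = 1/N) is less than or equal to the maximum over all sending and receiving loads under P; that is, max( max_{k,n} S⋆ k n , max_{f,n} R⋆ f n ) ≤ max( max_{k,n} S k n , max_{f,n} R f n ), where S⋆, R⋆ are the loads induced by P⋆ and S, R those induced by P. -/
open Finset

/-- A traffic matrix: nonnegative entries. -/
def IsTraffic {M : ℕ} (D : Fin M → Fin M → ℝ) : Prop := ∀ k f, 0 ≤ D k f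

/-- An allocation matrix: nonnegative entries whose per-pair fractions sum to 1. -/
def IsAlloc {M N : ℕ} (P : Fin M → Fin M → Fin N → ℝ) : Prop :=
  (∀ k f n, 0 ≤ P k f n) ∧ (∀ k f, ∑ n, P k f n = 1)

/-- Sending load of source domain `k` on rail `n`. -/
def sload {M N : ℕ} (D : Fin M → Fin M → ℝ) (P : Fin M → Fin M → Fin N → ℝ)
    (k : Fin M) (n : Fin N) : ℝ := ∑ f, D k f * P k f n

/-- Receiving load of destination domain `f` on rail `n`. -/
def rload {M N : ℕ} (D : Fin M → Fin M → ℝ) (P : Fin M → Fin M → Fin N → ℝ)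
    (f : Fin M) (n : Fin N) : ℝ := ∑ k, D k f * P k f n

/-- The bottleneck load of an allocation: the maximum over all sending and
receiving loads, `max( max_{k,n} S k n , max_{f,n} R f n )`. -/
noncomputable def maxLoad {M N : ℕ} [NeZero M] [NeZero N]
    (D : Fin M → Fin M → ℝ) (P : Fin M → Fin M → Fin N → ℝ) : ℝ :=
  max
    (Finset.univ.sup' Finset.univ_nonempty
      (fun q : Fin M × Fin N => sload D P q.1 q.2))
    (Finset.univ.sup' Finset.univ_nonempty
      (fun q : Fin M × Fin N => rload D P q.1 q.2))

/-- the uniform allocation `P⋆ k f n = 1/N` is globally optimal for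
the min–max load-balancing problem. -/
theorem uniform_alloc_optimal (M N : ℕ) [NeZero M] [NeZero N]
    (D : Fin M → Fin M → ℝ) (hD : IsTraffic D)
    (P : Fin M → Fin M → Fin N → ℝ) (hP : IsAlloc P) :
    maxLoad (M := M) (N := N) D (fun _ _ _ => 1 / (N : ℝ)) ≤ maxLoad D P := by
  have hN : (0:ℝ) < (N:ℝ) := by
    exact_mod_cast Nat.pos_of_ne_zero (NeZero.ne N)
  unfold maxLoad
  apply max_le
  · apply Finset.sup'_le
    intro q _
    have key : (N:ℝ) * sload D (fun _ _ _ => 1 / (N : ℝ)) q.1 q.2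
        ≤ (N:ℝ) * (Finset.univ.sup' Finset.univ_nonempty
          (fun q : Fin M × Fin N => sload D P q.1 q.2)) := by
      have h1 : (N:ℝ) * sload D (fun _ _ _ => 1 / (N : ℝ)) q.1 q.2
          = ∑ n, sload D P q.1 n := by
        simp only [sload]
        rw [Finset.sum_comm]
        rw [Finset.mul_sum]
        congr 1; ext f
        rw [← Finset.mul_sum, hP.2]
        field_simp
      rw [h1]
      calc ∑ n, sload D P q.1 n
          ≤ ∑ _n : Fin N, (Finset.univ.sup' Finset.univ_nonempty
              (fun q : Fin M × Fin N => sload D P q.1 q.2)) := by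
            apply Finset.sum_le_sum
            intro n _
            exact Finset.le_sup' (fun q : Fin M × Fin N => sload D P q.1 q.2)
              (Finset.mem_univ (q.1, n))
        _ = (N:ℝ) * _ := by simp [mul_comm]
    have := le_of_mul_le_mul_left key hN
    exact this.trans (le_max_left _ _)
  · apply Finset.sup'_le
    intro q _
    have key : (N:ℝ) * rload D (fun _ _ _ => 1 / (N : ℝ)) q.1 q.2
        ≤ (N:ℝ) * (Finset.univ.sup' Finset.univ_nonempty
          (fun q : Fin M × Fin N => rload D P q.1 q.2)) := by
      have h1 : (N:ℝ) * rload D (fun _ _ _ => 1 / (N : ℝ)) q.1 q.2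
          = ∑ n, rload D P q.1 n := by
        simp only [rload]
        rw [Finset.sum_comm]
        rw [Finset.mul_sum]
        congr 1; ext k
        rw [← Finset.mul_sum, hP.2]
        field_simp
      rw [h1]
      calc ∑ n, rload D P q.1 n
          ≤ ∑ _n : Fin N, (Finset.univ.sup' Finset.univ_nonempty
              (fun q : Fin M × Fin N => rload D P q.1 q.2)) := by
            apply Finset.sum_le_sum
            intro n _
            exact Finset.le_sup' (fun q : Fin M × Fin N => rload D P q.1 q.2)
              (Finset.mem_univ (q.1, n))
        _ = (N:ℝ) * _ := by simp [mul_comm]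
    have := le_of_mul_le_mul_left key hN
    exact this.trans (le_max_right _ _)
end

section
/- For every traffic matrix D, the minimum over all allocation matrices P of the maximum sending/receiving load equals (1/N) times the larger of the maximum row sum and maximum column sum of D: min_{P} max( max_{k,n} S k n , max_{f,n} R f n ) = (1/N) · max( max_{k} ∑_{f} D k f , max_{f} ∑_{k} D k f ), and this minimum is attained by the uniform allocation P⋆ with P⋆ k f n = 1/N. -/
open Finset

lemma sup'_prod_fst {M N : ℕ} [NeZero M] [NeZero N] (g : Fin M → ℝ) :
    (Finset.univ : Finset (Fin M × Fin N)).sup' Finset.univ_nonempty (fun q => g q.1)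
      = Finset.univ.sup' Finset.univ_nonempty g := by
  apply le_antisymm
  · exact Finset.sup'_le _ _ fun q _ => Finset.le_sup' g (Finset.mem_univ q.1)
  · exact Finset.sup'_le _ _ fun k _ =>
      Finset.le_sup' (fun q : Fin M × Fin N => g q.1)
        (Finset.mem_univ (k, ⟨0, Nat.pos_of_ne_zero (NeZero.ne N)⟩))

/-- the minimum over all allocation matrices of the maximum
sending/receiving load equals `(1/N) · max(max row sum, max column sum)` of `D`,
and this minimum is attained by the uniform allocation `P⋆ k f n = 1/N`. -/
theorem minmax_load_eq (M N : ℕ) [NeZero M] [NeZero N]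
    (D : Fin M → Fin M → ℝ) (hD : IsTraffic D) :
    (IsLeast {t : ℝ | ∃ P : Fin M → Fin M → Fin N → ℝ, IsAlloc P ∧ maxLoad D P = t}
      ((1 / (N : ℝ)) *
        max (Finset.univ.sup' Finset.univ_nonempty (fun k : Fin M => ∑ f : Fin M, D k f))
            (Finset.univ.sup' Finset.univ_nonempty (fun f : Fin M => ∑ k : Fin M, D k f)))) ∧
    maxLoad (M := M) (N := N) D (fun _ _ _ => 1 / (N : ℝ)) =
      (1 / (N : ℝ)) *
        max (Finset.univ.sup' Finset.univ_nonempty (fun k : Fin M => ∑ f : Fin M, D k f))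
            (Finset.univ.sup' Finset.univ_nonempty (fun f : Fin M => ∑ k : Fin M, D k f)) := by
  have hN : (0:ℝ) < N := Nat.cast_pos.mpr (Nat.pos_of_ne_zero (NeZero.ne N))
  have hc : (0:ℝ) ≤ 1 / N := by positivity
  have hmax : ∀ x y : ℝ, (1/(N:ℝ)) * max x y = max ((1/(N:ℝ))*x) ((1/(N:ℝ))*y) :=
    fun x y => mul_max_of_nonneg x y hc
  have hcomp : ∀ (g : Fin M → ℝ),
      (1/(N:ℝ)) * Finset.univ.sup' Finset.univ_nonempty g
        = Finset.univ.sup' Finset.univ_nonempty (fun k => (1/(N:ℝ)) * g k) :=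
    fun g => Finset.comp_sup'_eq_sup'_comp _ (fun x => (1/(N:ℝ))*x) (fun x y => hmax x y)
  -- value of the uniform allocation
  have hsl : (fun q : Fin M × Fin N => sload D (fun _ _ _ => 1/(N:ℝ)) q.1 q.2)
      = fun q => (1/(N:ℝ)) * ∑ f, D q.1 f := by
    funext q; simp only [sload, one_div, mul_comm]; rw [← Finset.sum_mul, mul_comm]
  have hrl : (fun q : Fin M × Fin N => rload D (fun _ _ _ => 1/(N:ℝ)) q.1 q.2)
      = fun q => (1/(N:ℝ)) * ∑ k, D k q.1 := by
    funext q; simp only [rload, one_div, mul_comm]; rw [← Finset.sum_mul, mul_comm]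
  have huniform : maxLoad (M := M) (N := N) D (fun _ _ _ => 1 / (N : ℝ)) =
      (1 / (N : ℝ)) *
        max (Finset.univ.sup' Finset.univ_nonempty (fun k : Fin M => ∑ f : Fin M, D k f))
            (Finset.univ.sup' Finset.univ_nonempty (fun f : Fin M => ∑ k : Fin M, D k f)) := by
    unfold maxLoad
    rw [hsl, hrl, hmax, hcomp, hcomp,
      sup'_prod_fst (N := N) (fun k => (1/(N:ℝ)) * ∑ f, D k f),
      sup'_prod_fst (N := N) (fun f => (1/(N:ℝ)) * ∑ k, D k f)]
  refine ⟨⟨⟨fun _ _ _ => 1/(N:ℝ), ⟨⟨fun _ _ _ => hc, fun k f => by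
      simp [Finset.sum_const, Finset.card_univ]⟩, huniform⟩⟩, ?_⟩, huniform⟩
  -- lower bound
  rintro t ⟨P, ⟨hP0, hP1⟩, rfl⟩
  rw [hmax]
  unfold maxLoad
  refine max_le_max ?_ ?_
  · rw [hcomp]
    apply Finset.sup'_le
    intro k _
    rw [one_div, inv_mul_le_iff₀ hN]
    have hsum : ∑ f, D k f = ∑ n, sload D P k n := by
      unfold sload
      rw [Finset.sum_comm]
      exact Finset.sum_congr rfl fun f _ => by rw [← Finset.mul_sum, hP1 k f, mul_one]
    rw [hsum]
    calc ∑ n, sload D P k n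
        ≤ ∑ _n : Fin N, Finset.univ.sup' Finset.univ_nonempty
            (fun q : Fin M × Fin N => sload D P q.1 q.2) :=
          Finset.sum_le_sum fun n _ =>
            Finset.le_sup' (fun q : Fin M × Fin N => sload D P q.1 q.2) (Finset.mem_univ (k, n))
      _ = _ := by simp [Finset.sum_const, Finset.card_univ]
  · rw [hcomp]
    apply Finset.sup'_le
    intro f _
    rw [one_div, inv_mul_le_iff₀ hN]
    have hsum : ∑ k, D k f = ∑ n, rload D P f n := by
      unfold rload
      rw [Finset.sum_comm]
      exact Finset.sum_congr rfl fun k _ => by rw [← Finset.mul_sum, hP1 k f, mul_one]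
    rw [hsum]
    calc ∑ n, rload D P f n
        ≤ ∑ _n : Fin N, Finset.univ.sup' Finset.univ_nonempty
            (fun q : Fin M × Fin N => rload D P q.1 q.2) :=
          Finset.sum_le_sum fun n _ =>
            Finset.le_sup' (fun q : Fin M × Fin N => rload D P q.1 q.2) (Finset.mem_univ (f, n))
      _ = _ := by simp [Finset.sum_const, Finset.card_univ]
end

section
/- List-scheduling greedy upper bound: let L : Fin N → ℝ be the final machine loads produced by the greedy algorithm on a list of nonnegative weights w_1, …, w_F. Then the maximum final load satisfies max_{j} L j ≤ (∑_{i} w_i)/N + max_{i} w_i. -/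
/-!
Throughout the run no machine exceeds the average load by more than the largest weight:
each weight goes onto a machine whose load is at most the current average, and the
average never decreases since weights are nonnegative. At the end the average is `(∑ w) / N`.
-/

open Finset

/-- The machine of minimal current load, ties broken by lowest machine index. -/
noncomputable def minIdx {N : ℕ} [NeZero N] (loads : Fin N → ℝ) : Fin N :=
  (Finset.univ.filter fun j => ∀ i, loads j ≤ loads i).min' (by
    classical
    obtain ⟨j, -, hj⟩ := Finset.exists_min_image (Finset.univ : Finset (Fin N)) loads
      Finset.univ_nonempty
    exact ⟨j, Finset.mem_filter.mpr ⟨Finset.mem_univ j, fun i => hj i (Finset.mem_univ i)⟩⟩)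

/-- Final machine loads of the list-scheduling greedy algorithm: process the
weights in list order, starting from all-zero loads, each time adding the weight
to a machine of minimal current cumulative load (lowest index on ties). -/
noncomputable def greedyLoads (N : ℕ) [NeZero N] (ws : List ℝ) : Fin N → ℝ :=
  ws.foldl
    (fun loads w => Function.update loads (minIdx loads) (loads (minIdx loads) + w))
    (fun _ => 0)

theorem List.le_foldr_max {α : Type*} [LinearOrder α] (l : List α) (b : α) : b ≤ l.foldr max b := by
  induction l with
  | nil => exact le_rfl
  | cons x l ih => exact ih.trans (le_max_right x _)

section

variable {ι : Type*} [Fintype ι]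

theorem sum_update_add_self [DecidableEq ι] (f : ι → ℝ) (m : ι) (w : ℝ) :
    ∑ i, Function.update f m (f m + w) i = ∑ i, f i + w := by
  rw [Finset.sum_update_of_mem (Finset.mem_univ m), ← Finset.add_sum_erase _ f (Finset.mem_univ m),
    Finset.sdiff_singleton_eq_erase]
  ring

def BalancedWithin (C : ℝ) (loads : ι → ℝ) : Prop :=
  ∀ j, loads j ≤ (∑ i, loads i) / Fintype.card ι + C

theorem balancedWithin_const_zero {C : ℝ} (hC : 0 ≤ C) : BalancedWithin C (fun _ : ι => 0) := by
  simpa [BalancedWithin] using fun _ : ι => hC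

theorem BalancedWithin.update_add_of_le_all [DecidableEq ι] {C w : ℝ} {loads : ι → ℝ} {m : ι}
    (h : BalancedWithin C loads) (hm : ∀ i, loads m ≤ loads i) (hw₀ : 0 ≤ w) (hwC : w ≤ C) :
    BalancedWithin C (Function.update loads m (loads m + w)) := by
  have hcard : (0 : ℝ) < Fintype.card ι := by exact_mod_cast Fintype.card_pos_iff.2 ⟨m⟩
  have hm_avg : loads m ≤ (∑ i, loads i) / Fintype.card ι := by
    rw [le_div_iff₀ hcard, mul_comm, ← nsmul_eq_mul]
    exact Finset.card_nsmul_le_sum _ _ _ fun i _ => hm i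
  have havg : (∑ i, loads i) / Fintype.card ι ≤ (∑ i, loads i + w) / Fintype.card ι := by
    gcongr; linarith
  intro j
  rw [sum_update_add_self]
  rcases eq_or_ne j m with rfl | hj
  · rw [Function.update_self]; linarith
  · rw [Function.update_of_ne hj]; linarith [h j]

end

section

variable {N : ℕ} [NeZero N]

theorem minIdx_le (loads : Fin N → ℝ) (i : Fin N) : loads (minIdx loads) ≤ loads i := by
  unfold minIdx
  exact (Finset.mem_filter.1 (Finset.min'_mem {j | ∀ i, loads j ≤ loads i} _)).2 i

noncomputable def greedyStep (loads : Fin N → ℝ) (w : ℝ) : Fin N → ℝ :=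
  Function.update loads (minIdx loads) (loads (minIdx loads) + w)

theorem greedyLoads_eq_foldl (ws : List ℝ) : greedyLoads N ws = ws.foldl greedyStep 0 := rfl

theorem sum_foldl_greedyStep (ws : List ℝ) (loads : Fin N → ℝ) :
    ∑ i, ws.foldl greedyStep loads i = ∑ i, loads i + ws.sum := by
  induction ws generalizing loads with
  | nil => simp
  | cons w ws ih => rw [List.foldl_cons, ih, greedyStep, sum_update_add_self, List.sum_cons]; ring

theorem BalancedWithin.foldl_greedyStep {C : ℝ} {ws : List ℝ} (hws : ∀ w ∈ ws, 0 ≤ w ∧ w ≤ C)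
    {loads : Fin N → ℝ} (h : BalancedWithin C loads) :
    BalancedWithin C (ws.foldl greedyStep loads) := by
  induction ws generalizing loads with
  | nil => exact h
  | cons w ws ih =>
    obtain ⟨hw₀, hwC⟩ := hws w List.mem_cons_self
    exact ih (fun v hv => hws v (List.mem_cons_of_mem w hv))
      (h.update_add_of_le_all (minIdx_le loads) hw₀ hwC)

end

/-- greedy upper bound `max_j L j ≤ (∑ w)/N + max_i w_i`
(the max weight read as `0` for the empty list). -/
theorem greedy_max_load_le (N : ℕ) [NeZero N] (ws : List ℝ)
    (hw : ∀ w ∈ ws, 0 ≤ w) :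
    Finset.univ.sup' Finset.univ_nonempty (greedyLoads N ws) ≤
      ws.sum / (N : ℝ) + ws.foldr max 0 := by
  set M := ws.foldr max 0
  have hM : ∀ w ∈ ws, 0 ≤ w ∧ w ≤ M := fun w hw' => ⟨hw w hw', List.le_max_of_le' 0 hw' le_rfl⟩
  have hbal : BalancedWithin M (greedyLoads N ws) := by
    rw [greedyLoads_eq_foldl]
    exact (balancedWithin_const_zero (ws.le_foldr_max 0)).foldl_greedyStep hM
  refine Finset.sup'_le _ _ fun j _ => ?_
  simpa [greedyLoads_eq_foldl, sum_foldl_greedyStep] using hbal j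
end

section
/- Graham's LPT approximation bound: suppose the weights are processed in nonincreasing order (w_1 ≥ w_2 ≥ … ≥ w_F ≥ 0), let L : Fin N → ℝ be the final machine loads produced by the greedy algorithm on this sorted list, and let OPT be the minimum over all assignments x : Fin F → Fin N of the maximum machine load max_{j} ∑_{i : x i = j} w_i. Then max_{j} L j ≤ (4/3 − 1/(3N)) · OPT. -/
open Finset

/-!
Fix an assignment `x` of makespan `T`, a machine `m` of the greedy schedule, the last job `c`
placed on `m`, and the load `ℓ` of `m` just before `c`, which is minimal at that moment.
If `w c ≤ T / 3`, averaging gives `N ℓ ≤ N T - w c`, hence `ℓ + w c ≤ (4/3 - 1/(3N)) T`.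
Otherwise every job up to `c` exceeds `T / 3`, so `x` puts at most two of them on a machine and
`c < 2N`. If `c < N`, some machine is still empty when `c` arrives. If `N ≤ c`, put
`j = 2N - 1 - c`: counting jobs shows that before `c` some machine carries at most `w j`, and
that `x` puts some job `≤ j` together with another job `≤ c`, so `w j + w c ≤ T`.
-/

section MachineLoad

variable {ι β : Type*} [DecidableEq β]

def machineLoad (x : ι → β) (w : ι → ℝ) (s : Finset ι) (m : β) : ℝ :=
  ∑ i ∈ s with x i = m, w i

def makespan [Fintype ι] [Fintype β] [Nonempty β] (x : ι → β) (w : ι → ℝ) : ℝ :=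
  univ.sup' univ_nonempty (machineLoad x w univ)

variable (x : ι → β) (w : ι → ℝ)

theorem sum_machineLoad [Fintype β] (s : Finset ι) :
    ∑ m, machineLoad x w s m = ∑ i ∈ s, w i :=
  sum_fiberwise s x w

theorem machineLoad_insert [DecidableEq ι] {s : Finset ι} {a : ι} (ha : a ∉ s) (m : β) :
    machineLoad x w (insert a s) m = machineLoad x w s m + if x a = m then w a else 0 := by
  unfold machineLoad
  rw [filter_insert]
  split_ifs with h
  · rw [sum_insert (fun h' => ha (mem_filter.mp h').1), add_comm]
  · rw [add_zero]

theorem machineLoad_mono (hw : ∀ i, 0 ≤ w i) {s t : Finset ι} (hst : s ⊆ t) (m : β) :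
    machineLoad x w s m ≤ machineLoad x w t m :=
  sum_le_sum_of_subset_of_nonneg (filter_subset_filter _ hst)
    fun i _ _ => hw i

theorem le_machineLoad (hw : ∀ i, 0 ≤ w i) {s : Finset ι} {a : ι} (ha : a ∈ s) :
    w a ≤ machineLoad x w s (x a) :=
  single_le_sum (fun i _ => hw i) (mem_filter.mpr ⟨ha, rfl⟩)

theorem add_le_machineLoad [DecidableEq ι] (hw : ∀ i, 0 ≤ w i) {s : Finset ι} {a b : ι}
    (ha : a ∈ s) (hb : b ∈ s) (hab : a ≠ b) (hx : x a = x b) :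
    w a + w b ≤ machineLoad x w s (x a) := by
  rw [← sum_pair hab]
  refine sum_le_sum_of_subset_of_nonneg ?_ fun i _ _ => hw i
  intro i hi
  rcases mem_insert.mp hi with rfl | hi
  · exact mem_filter.mpr ⟨ha, rfl⟩
  · rw [mem_singleton.mp hi]
    exact mem_filter.mpr ⟨hb, hx.symm⟩

theorem machineLoad_univ_eq_add_of_last [Fintype ι] [LinearOrder ι] [LocallyFiniteOrderBot ι]
    {c : ι} {m : β} (hc : x c = m) (hlast : ∀ i, x i = m → i ≤ c) :
    machineLoad x w univ m = machineLoad x w (Iio c) m + w c := by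
  have hIic : machineLoad x w univ m = machineLoad x w (Iic c) m := by
    unfold machineLoad
    congr 1
    ext i
    simp only [mem_filter, mem_univ, true_and, mem_Iic]
    exact ⟨fun h => ⟨hlast i h, h⟩, And.right⟩
  rw [hIic, ← Iio_insert, machineLoad_insert x w notMem_Iio_self, if_pos hc]

end MachineLoad

theorem card_le_two_of_third_lt {ι : Type*} {s : Finset ι} {w : ι → ℝ} {T : ℝ} (hT : 0 ≤ T)
    (hs : ∑ i ∈ s, w i ≤ T) (hw : ∀ i ∈ s, T / 3 < w i) : s.card ≤ 2 := by
  by_contra! h3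
  have hne : s.Nonempty := card_pos.mp (by omega)
  have hlt : ∑ _i ∈ s, T / 3 < ∑ i ∈ s, w i := sum_lt_sum_of_nonempty hne hw
  rw [sum_const, nsmul_eq_mul] at hlt
  have : (3 : ℝ) ≤ s.card := by exact_mod_cast h3
  nlinarith

theorem exists_ne_map_eq_of_two_mul_card_lt {α β : Type*} [DecidableEq β] [Fintype β]
    (x : α → β) {S P : Finset α} (hSP : S ⊆ P) (hP : ∀ m, {i ∈ P | x i = m}.card ≤ 2)
    (hcard : 2 * Fintype.card β < S.card + P.card) :
    ∃ a ∈ S, ∃ b ∈ P, a ≠ b ∧ x a = x b := by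
  by_contra! hno
  -- A fibre meeting `S` contains no other point of `P`.
  have hfiber : ∀ m, {i ∈ S | x i = m}.card + {i ∈ P | x i = m}.card ≤ 2 := by
    intro m
    rcases {i ∈ S | x i = m}.eq_empty_or_nonempty with hS | ⟨a, ha⟩
    · rw [hS, card_empty, zero_add]
      exact hP m
    · obtain ⟨haS, rfl⟩ := mem_filter.mp ha
      have hPa : {i ∈ P | x i = x a} ⊆ {a} := fun b hb => by
        obtain ⟨hbP, hxb⟩ := mem_filter.mp hb
        by_contra hba
        exact hno a haS b hbP (Ne.symm (notMem_singleton.mp hba)) hxb.symm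
      have hSa := (filter_subset_filter (x · = x a) hSP).trans hPa
      have := card_le_card hSa
      have := card_le_card hPa
      rw [card_singleton] at *
      omega
  have := sum_le_sum fun m (_ : m ∈ univ) => hfiber m
  rw [sum_add_distrib, ← card_eq_sum_card_fiberwise fun _ _ => mem_univ _,
    ← card_eq_sum_card_fiberwise fun _ _ => mem_univ _, sum_const,
    card_univ, smul_eq_mul] at this
  omega

theorem exists_machineLoad_le_of_card_add_lt {F N : ℕ} {w : Fin F → ℝ} (hw0 : ∀ i, 0 ≤ w i)
    (hw : Antitone w) (A : Fin F → Fin N) (P : Finset (Fin F)) (j : Fin F)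
    (hP : P.card + j < 2 * N) : ∃ m, machineLoad A w P m ≤ w j := by
  by_contra! hheavy
  -- A machine heavier than `w j` holds two jobs, or a single job preceding `j`.
  have hfiber : ∀ m, 2 ≤ {i ∈ P | A i = m}.card + {i ∈ {i ∈ P | i < j} | A i = m}.card := by
    intro m
    have hm := hheavy m
    unfold machineLoad at hm
    rcases Nat.lt_or_ge 1 {i ∈ P | A i = m}.card with h2 | h1
    · omega
    rcases Nat.le_one_iff_eq_zero_or_eq_one.mp h1 with h0 | h1
    · rw [card_eq_zero.mp h0, sum_empty] at hm
      exact absurd hm (not_lt.mpr (hw0 j))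
    · obtain ⟨i, hi⟩ := card_eq_one.mp h1
      rw [hi, sum_singleton] at hm
      obtain ⟨hiP, hAi⟩ := mem_filter.mp (hi ▸ mem_singleton_self i)
      have hij : i < j := hw.reflect_lt hm
      have : 0 < {i ∈ {i ∈ P | i < j} | A i = m}.card :=
        card_pos.mpr ⟨i, by simp [hiP, hij, hAi]⟩
      omega
  have hlt : {i ∈ P | i < j}.card ≤ j :=
    (card_le_card fun i hi => mem_Iio.mpr (mem_filter.mp hi).2).trans
      (Fin.card_Iio j).le
  have := sum_le_sum fun m (_ : m ∈ univ) => hfiber m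
  rw [sum_add_distrib, ← card_eq_sum_card_fiberwise fun _ _ => mem_univ _,
    ← card_eq_sum_card_fiberwise fun _ _ => mem_univ _, sum_const,
    card_univ, Fintype.card_fin, smul_eq_mul] at this
  omega

section CriticalJob

variable {F N : ℕ} {w : Fin F → ℝ} {x A : Fin F → Fin N} {T ℓ : ℝ} {c : Fin F}

theorem one_le_lpt_ratio (N : ℕ) [NeZero N] : 1 ≤ 4 / 3 - 1 / (3 * (N : ℝ)) := by
  have hN : (1 : ℝ) ≤ N := Nat.one_le_cast.mpr NeZero.one_le
  linarith [one_div_le_one_div_of_le (by norm_num : (0 : ℝ) < 3) (by linarith : 3 ≤ 3 * (N : ℝ))]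

theorem add_le_of_le_third [NeZero N] (hw0 : ∀ i, 0 ≤ w i)
    (hT : ∀ m, machineLoad x w univ m ≤ T)
    (hℓ : ∀ m, ℓ ≤ machineLoad A w (Iio c) m) (hc : w c ≤ T / 3) :
    ℓ + w c ≤ (4 / 3 - 1 / (3 * (N : ℝ))) * T := by
  have hN : (1 : ℝ) ≤ N := Nat.one_le_cast.mpr NeZero.one_le
  have hbefore : N * ℓ ≤ ∑ i ∈ Iio c, w i := by
    calc N * ℓ = ∑ _m : Fin N, ℓ := by simp
      _ ≤ ∑ m, machineLoad A w (Iio c) m := sum_le_sum fun m _ => hℓ m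
      _ = ∑ i ∈ Iio c, w i := sum_machineLoad A w _
  have htotal : ∑ i ∈ Iio c, w i + w c ≤ N * T := by
    calc ∑ i ∈ Iio c, w i + w c = ∑ i ∈ Iic c, w i := by
          rw [← Iio_insert, sum_insert notMem_Iio_self, add_comm]
      _ ≤ ∑ i, w i := sum_le_sum_of_subset_of_nonneg (subset_univ _)
          fun i _ _ => hw0 i
      _ = ∑ m, machineLoad x w univ m := (sum_machineLoad x w _).symm
      _ ≤ ∑ _m : Fin N, T := sum_le_sum fun m _ => hT m
      _ = N * T := by simp
  have hkey : N * (ℓ + w c) ≤ N * ((4 / 3 - 1 / (3 * (N : ℝ))) * T) := by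
    have hscale : (N : ℝ) * ((4 / 3 - 1 / (3 * (N : ℝ))) * T) = N * T + (N - 1) * (T / 3) := by
      field_simp
      ring
    rw [hscale]
    nlinarith [mul_le_mul_of_nonneg_left hc (sub_nonneg.mpr hN)]
  exact le_of_mul_le_mul_left hkey (by linarith)

theorem add_le_of_third_lt (hw0 : ∀ i, 0 ≤ w i) (hw : Antitone w)
    (hT : ∀ m, machineLoad x w univ m ≤ T)
    (hℓ : ∀ m, ℓ ≤ machineLoad A w (Iio c) m) (hc : T / 3 < w c) : ℓ + w c ≤ T := by
  have hcT : w c ≤ T := (le_machineLoad x w hw0 (mem_univ c)).trans (hT _)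
  have hT0 : 0 ≤ T := by linarith
  have hpair : ∀ m, {i ∈ Iic c | x i = m}.card ≤ 2 := fun m =>
    card_le_two_of_third_lt hT0
      ((machineLoad_mono x w hw0 (subset_univ _) m).trans (hT m))
      fun i hi => hc.trans_le (hw (mem_Iic.mp (mem_filter.mp hi).1))
  have hc2N : c.val + 1 ≤ 2 * N := by
    simpa [Fin.card_Iic] using card_le_mul_card_image_of_maps_to
      (fun i _ => mem_univ (x i)) 2 fun m _ => hpair m
  rcases lt_or_ge c.val N with hcN | hNc
  · obtain ⟨m, -, hm⟩ := exists_mem_notMem_of_card_lt_card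
      (s := (Iio c).image A) (t := univ)
      (card_image_le.trans_lt (by simpa [Fin.card_Iio] using hcN))
    have hempty : machineLoad A w (Iio c) m = 0 := sum_eq_zero fun i hi => by
      obtain ⟨hic, rfl⟩ := mem_filter.mp hi
      exact absurd (mem_image_of_mem A hic) hm
    linarith [hℓ m]
  · set j : Fin F := ⟨2 * N - 1 - c, by omega⟩
    obtain ⟨m, hm⟩ := exists_machineLoad_le_of_card_add_lt hw0 hw A (Iio c) j
      (by simp only [Fin.card_Iio, j]; omega)
    obtain ⟨a, ha, b, hb, hab, hxab⟩ := exists_ne_map_eq_of_two_mul_card_lt x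
      (Iic_subset_Iic.mpr (show j ≤ c from Fin.le_def.mpr (by simp only [j]; omega)))
      hpair (by simp only [Fin.card_Iic, Fintype.card_fin, j]; omega)
    calc ℓ + w c ≤ w j + w c := by linarith [hℓ m]
      _ ≤ w a + w b := add_le_add (hw (mem_Iic.mp ha)) (hw (mem_Iic.mp hb))
      _ ≤ machineLoad x w univ (x a) :=
          add_le_machineLoad x w hw0 (mem_univ a) (mem_univ b) hab hxab
      _ ≤ T := hT _

theorem add_le_lpt_ratio_mul [NeZero N] (hw0 : ∀ i, 0 ≤ w i) (hw : Antitone w)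
    (hT : ∀ m, machineLoad x w univ m ≤ T)
    (hℓ : ∀ m, ℓ ≤ machineLoad A w (Iio c) m) :
    ℓ + w c ≤ (4 / 3 - 1 / (3 * (N : ℝ))) * T := by
  rcases le_or_gt (w c) (T / 3) with hc | hc
  · exact add_le_of_le_third hw0 hT hℓ hc
  · have hcT : w c ≤ T := (le_machineLoad x w hw0 (mem_univ c)).trans (hT _)
    calc ℓ + w c ≤ T := add_le_of_third_lt hw0 hw hT hℓ hc
      _ ≤ (4 / 3 - 1 / (3 * (N : ℝ))) * T :=
          le_mul_of_one_le_left (by linarith) (one_le_lpt_ratio N)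

end CriticalJob

section Greedy

variable {N : ℕ} [NeZero N]

theorem greedyLoads_append_singleton (ws : List ℝ) (a : ℝ) :
    greedyLoads N (ws ++ [a]) =
      Function.update (greedyLoads N ws) (minIdx (greedyLoads N ws))
        (greedyLoads N ws (minIdx (greedyLoads N ws)) + a) := by
  simp [greedyLoads, List.foldl_append]

variable (N) in
noncomputable def greedyMachine {F : ℕ} (w : Fin F → ℝ) (i : Fin F) : Fin N :=
  minIdx (greedyLoads N ((List.ofFn w).take i))

theorem greedyLoads_take_eq_machineLoad {F : ℕ} (w : Fin F → ℝ) {t : ℕ} (ht : t ≤ F) :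
    greedyLoads N ((List.ofFn w).take t) =
      machineLoad (greedyMachine N w) w {i | i.val < t} := by
  induction t with
  | zero =>
    funext m
    simp [greedyLoads, machineLoad]
  | succ t ih =>
    have htF : t < F := ht
    have hprefix : (List.ofFn w).take (t + 1) = (List.ofFn w).take t ++ [w ⟨t, htF⟩] := by
      simp [List.take_add_one, htF]
    have hjobs : univ.filter (fun i : Fin F => i.val < t + 1) =
        insert ⟨t, htF⟩ (univ.filter fun i : Fin F => i.val < t) := by
      ext i
      simp only [mem_filter, mem_univ, true_and, mem_insert, Fin.ext_iff]
      omega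
    have hmachine : greedyMachine N w ⟨t, htF⟩ = minIdx (greedyLoads N ((List.ofFn w).take t)) :=
      rfl
    funext m
    rw [hprefix, greedyLoads_append_singleton, hjobs, machineLoad_insert _ _ (by simp),
      hmachine, ← ih htF.le]
    rcases eq_or_ne m (minIdx (greedyLoads N ((List.ofFn w).take t))) with rfl | hm
    · simp
    · simp [hm, hm.symm]

theorem greedyLoads_ofFn {F : ℕ} (w : Fin F → ℝ) :
    greedyLoads N (List.ofFn w) = machineLoad (greedyMachine N w) w univ := by
  simpa [List.take_of_length_le] using greedyLoads_take_eq_machineLoad (N := N) w le_rfl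

theorem machineLoad_greedyMachine_le {F : ℕ} (w : Fin F → ℝ) (c : Fin F) (m : Fin N) :
    machineLoad (greedyMachine N w) w (Iio c) (greedyMachine N w c) ≤
      machineLoad (greedyMachine N w) w (Iio c) m := by
  have hprefix : greedyLoads N ((List.ofFn w).take c) =
      machineLoad (greedyMachine N w) w (Iio c) := by
    rw [greedyLoads_take_eq_machineLoad w c.isLt.le]
    congr 1
    ext i
    simp
  rw [← hprefix]
  exact minIdx_le _ m

end Greedy

theorem makespan_greedyMachine_le {F N : ℕ} [NeZero N] {w : Fin F → ℝ} (hw0 : ∀ i, 0 ≤ w i)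
    (hw : Antitone w) (x : Fin F → Fin N) :
    makespan (greedyMachine N w) w ≤ (4 / 3 - 1 / (3 * (N : ℝ))) * makespan x w := by
  have hT : ∀ m, machineLoad x w univ m ≤ makespan x w := fun m =>
    le_sup' _ (mem_univ m)
  refine sup'_le _ _ fun m _ => ?_
  rcases (univ.filter fun i => greedyMachine N w i = m).eq_empty_or_nonempty
    with hidle | hbusy
  · have hT0 : 0 ≤ makespan x w := (sum_nonneg fun i _ => hw0 i).trans (hT m)
    rw [machineLoad, hidle, sum_empty]
    exact mul_nonneg (by linarith [one_le_lpt_ratio N]) hT0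
  · set c := max' _ hbusy
    have hc : greedyMachine N w c = m := (mem_filter.mp (max'_mem _ hbusy)).2
    have hlast : ∀ i, greedyMachine N w i = m → i ≤ c := fun i hi =>
      le_max' _ i (mem_filter.mpr ⟨mem_univ i, hi⟩)
    rw [machineLoad_univ_eq_add_of_last _ _ hc hlast]
    exact add_le_lpt_ratio_mul hw0 hw hT fun m' => hc ▸ machineLoad_greedyMachine_le w c m'

/-- Graham's LPT bound: if the weights `w : Fin F → ℝ` are
nonnegative and sorted in nonincreasing order, and the greedy algorithm processes
them in this order, then the resulting makespan is at most `(4/3 − 1/(3N))` times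
the optimal makespan over all assignments `x : Fin F → Fin N`. -/
theorem lpt_approximation (N F : ℕ) [NeZero N] (w : Fin F → ℝ)
    (hw : ∀ i, 0 ≤ w i) (hsorted : ∀ i j : Fin F, i ≤ j → w j ≤ w i) :
    Finset.univ.sup' Finset.univ_nonempty (greedyLoads N (List.ofFn w)) ≤
      (4 / 3 - 1 / (3 * (N : ℝ))) *
        Finset.univ.inf' Finset.univ_nonempty
          (fun x : Fin F → Fin N =>
            Finset.univ.sup' Finset.univ_nonempty
              (fun j : Fin N => ∑ i ∈ Finset.univ.filter (fun i : Fin F => x i = j), w i)) := by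
  rw [greedyLoads_ofFn]
  change makespan (greedyMachine N w) w ≤
    _ * univ.inf' univ_nonempty fun x => makespan x w
  obtain ⟨x, -, hx⟩ :=
    exists_mem_eq_inf' univ_nonempty fun x : Fin F → Fin N => makespan x w
  rw [hx]
  exact makespan_greedyMachine_le hw (fun i j hij => hsorted i j hij) x
end
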